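/- Let A be a commutative ring and let f ∈ A[x_1,…,x_k] be a symmetric polynomial that is both an n-cocycle and an m-cocycle (δ_n(f) = 0 and δ_m(f) = 0, with 1 ≤ n, m ≤ k). Then: (i) if n + m < k, f is also an (n+m)-cocycle, i.e., δ_{n+m}(f) = 0; and (ii) if n ≠ m, f is also an |n−m|-cocycle, i.e., δ_{|n−m|}(f) = 0. -/
import Mathlib


open MvPolynomial

/-- The `m`-coboundary map `δ_m` on polynomials in `k` variables `x_1, …, x_k`
(indexed by `Fin k`, with `j : Fin k` standing for the variable `x_{j+1}`),
landing in polynomials in the variables `x_0, …, x_k` (indexed by `Fin (k+1)`). -/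
noncomputable def delta (A : Type*) [CommRing A] (m k : ℕ)
    (f : MvPolynomial (Fin k) A) : MvPolynomial (Fin (k + 1)) A :=
  aeval (fun j : Fin k => (X j.succ : MvPolynomial (Fin (k + 1)) A)) f
    + ∑ i ∈ Finset.Icc 1 m, (-1 : MvPolynomial (Fin (k + 1)) A) ^ i *
        aeval (fun j : Fin k =>
          if (j : ℕ) + 1 < i then (X j.castSucc : MvPolynomial (Fin (k + 1)) A)
          else if (j : ℕ) + 1 = i then X j.castSucc + X j.succ
          else X j.succ) f
    + (-1 : MvPolynomial (Fin (k + 1)) A) ^ (m + 1) *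
        aeval (fun j : Fin k =>
          if (j : ℕ) + 1 ≤ m then (X j.castSucc : MvPolynomial (Fin (k + 1)) A)
          else X j.succ) f

/-- The monomial symmetric polynomial `τ λ` associated to a multi-index
`λ : Fin k → ℕ`: the sum of `x^μ` over the distinct rearrangements `μ` of `λ`. -/
noncomputable def tau (A : Type*) [CommRing A] {k : ℕ} (lam : Fin k → ℕ) :
    MvPolynomial (Fin k) A :=
  ∑ d ∈ (Finset.univ : Finset (Equiv.Perm (Fin k))).image
      (fun σ => Finsupp.equivFunOnFinite.symm (fun i => lam (σ i))),
    monomial d (1 : A)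

/-- The multiset of values of a multi-index `Fin k → ℕ`. -/
def multisetOf {k : ℕ} (lam : Fin k → ℕ) : Multiset ℕ :=
  Multiset.map lam Finset.univ.val

/-- The exponent multiset of an exponent vector `d : Fin k →₀ ℕ`. -/
def exMult {k : ℕ} (d : Fin k →₀ ℕ) : Multiset ℕ :=
  multisetOf (⇑d)

/-- `σ_p(n)`, the sum of the digits of `n` in base `p`. -/
def sigmaDigits (p n : ℕ) : ℕ := (Nat.digits p n).sum

/-- `α_p(λ)`, the number of carries when summing the entries of `λ` in base `p`;
equivalently the `p`-adic valuation of the multinomial coefficient of `λ`. -/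
def alphaCarry (p : ℕ) (s : Multiset ℕ) : ℕ :=
  padicValNat p (Nat.factorial s.sum / (s.map Nat.factorial).prod)

/-- The splitting distance `φ_p(λ) = (Σ_i σ_p(λ_i)) − |λ|`. -/
def phiSplit (p : ℕ) (s : Multiset ℕ) : ℕ :=
  (s.map (sigmaDigits p)).sum - Multiset.card s

/-- A multiset is power-of-`p` when all its entries are powers of `p`. -/
def IsPowOf (p : ℕ) (s : Multiset ℕ) : Prop := ∀ x ∈ s, ∃ a : ℕ, x = p ^ a

/-- `λ` is `p`-carry-minimal: `α_p(λ) ≤ α_p(μ)` for every multiset `μ` of positive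
integers with the same sum and the same number of entries as `λ`. -/
def IsCarryMin (p : ℕ) (s : Multiset ℕ) : Prop :=
  ∀ t : Multiset ℕ, (∀ x ∈ t, 0 < x) → t.sum = s.sum →
    Multiset.card t = Multiset.card s → alphaCarry p s ≤ alphaCarry p t

/-- A single gathering operation: replace two entries `a`, `b` by `a + b`. -/
def Gathers (s t : Multiset ℕ) : Prop :=
  ∃ a b u, s = a ::ₘ b ::ₘ u ∧ t = (a + b) ::ₘ u

/-- `gatherSet m λ = T^m(λ)`, the set of multisets obtained from `λ` by `m`
successive gathering operations. -/
def gatherSet : ℕ → Multiset ℕ → Set (Multiset ℕ)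
  | 0, s => {s}
  | m + 1, s => {t | ∃ u ∈ gatherSet m s, Gathers u t}

/-- One step of the annihilating-set construction: split an entry `x = a + b`
(with `a, b > 0` and no base-`p` carries in `a + b`), and add `b` onto another
entry `y`. -/
def AnnStep (p : ℕ) (μ ν : Multiset ℕ) : Prop :=
  ∃ (x y a b : ℕ) (u : Multiset ℕ), μ = x ::ₘ y ::ₘ u ∧ 0 < a ∧ 0 < b ∧ a + b = x ∧
    sigmaDigits p a + sigmaDigits p b = sigmaDigits p x ∧ ν = a ::ₘ (b + y) ::ₘ u

/-- `ann_p(λ)`: the smallest set of multisets containing `λ` closed under `AnnStep`. -/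
def annSet (p : ℕ) (lam : Multiset ℕ) : Set (Multiset ℕ) :=
  {μ | Relation.ReflTransGen (AnnStep p) lam μ}

/-- The `m`-coboundary map as a linear map. -/
noncomputable def deltaLM (A : Type*) [CommRing A] (m k : ℕ) :
    MvPolynomial (Fin k) A →ₗ[A] MvPolynomial (Fin (k + 1)) A :=
  (aeval (fun j : Fin k => (X j.succ : MvPolynomial (Fin (k + 1)) A))).toLinearMap
    + ∑ i ∈ Finset.Icc 1 m, ((-1 : A) ^ i) •
        (aeval (fun j : Fin k =>
          if (j : ℕ) + 1 < i then (X j.castSucc : MvPolynomial (Fin (k + 1)) A)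
          else if (j : ℕ) + 1 = i then X j.castSucc + X j.succ
          else X j.succ)).toLinearMap
    + ((-1 : A) ^ (m + 1)) •
        (aeval (fun j : Fin k =>
          if (j : ℕ) + 1 ≤ m then (X j.castSucc : MvPolynomial (Fin (k + 1)) A)
          else X j.succ)).toLinearMap
namespace Stmt19

noncomputable def dropF (A : Type*) [CommRing A] (k t : ℕ) (j : Fin k) :
    MvPolynomial (Fin (k + 1)) A :=
  if (j : ℕ) + 1 ≤ t then X j.castSucc else X j.succ

noncomputable def mergeF (A : Type*) [CommRing A] (k i : ℕ) (j : Fin k) :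
    MvPolynomial (Fin (k + 1)) A :=
  if (j : ℕ) + 1 < i then X j.castSucc
  else if (j : ℕ) + 1 = i then X j.castSucc + X j.succ
  else X j.succ

variable {A : Type*} [CommRing A] {k : ℕ}

lemma delta_eq (m : ℕ) (f : MvPolynomial (Fin k) A) :
    delta A m k f = aeval (dropF A k 0) f
      + ∑ i ∈ Finset.Icc 1 m,
          (-1 : MvPolynomial (Fin (k + 1)) A) ^ i * aeval (mergeF A k i) f
      + (-1 : MvPolynomial (Fin (k + 1)) A) ^ (m + 1) * aeval (dropF A k m) f := by
  have h0 : (dropF A k 0 : Fin k → MvPolynomial (Fin (k + 1)) A)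
      = fun j : Fin k => (X j.succ : MvPolynomial (Fin (k + 1)) A) := by
    funext j; simp [dropF]
  rw [delta, h0]
  rfl

def rho (k s : ℕ) (t : Fin (k + 1)) : Fin (k + 1) :=
  if h : t.val + s ≤ k then ⟨t.val + s, by omega⟩
  else ⟨(t.val + s) % (k + 1), Nat.mod_lt _ (by omega)⟩

lemma rho_val {k s : ℕ} (hs : s ≤ k) (t : Fin (k + 1)) :
    (rho k s t).val = if t.val + s ≤ k then t.val + s else t.val + s - (k + 1) := by
  have ht := t.isLt
  unfold rho
  split <;> simp only
  rw [Nat.mod_eq_sub_mod (by omega), Nat.mod_eq_of_lt (by omega)]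

def rot (k s : ℕ) (j : Fin k) : Fin k :=
  if h : j.val + s < k then ⟨j.val + s, h⟩
  else ⟨(j.val + s) % k, Nat.mod_lt _ j.pos⟩

lemma rot_val {k s : ℕ} (hs : s ≤ k) (j : Fin k) :
    (rot k s j).val = if j.val + s < k then j.val + s else j.val + s - k := by
  have hj := j.isLt
  unfold rot
  split <;> simp only
  rw [Nat.mod_eq_sub_mod (by omega), Nat.mod_eq_of_lt (by omega)]

lemma rot_injective {k s : ℕ} (hs : s ≤ k) : Function.Injective (rot k s) := by
  intro a b hab
  have h := congrArg Fin.val hab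
  rw [rot_val hs, rot_val hs] at h
  have ha := a.isLt; have hb := b.isLt
  apply Fin.ext
  split_ifs at h <;> omega

lemma aeval_perm {f : MvPolynomial (Fin k) A} (hsym : f.IsSymmetric)
    (e : Equiv.Perm (Fin k)) (g : Fin k → MvPolynomial (Fin (k + 1)) A) :
    aeval (fun j => g (e j)) f = aeval g f := by
  conv_rhs => rw [← hsym e]
  rw [aeval_rename]
  rfl

lemma rename_aeval (ρ : Fin (k + 1) → Fin (k + 1)) (g : Fin k → MvPolynomial (Fin (k + 1)) A)
    (f : MvPolynomial (Fin k) A) :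
    rename ρ (aeval g f) = aeval (fun j => rename ρ (g j)) f := by
  rw [← AlgHom.comp_apply, comp_aeval]

lemma drop_compat {s t : ℕ} (hst : s + t ≤ k) (j : Fin k) :
    rename (rho k s) (dropF A k t j) = dropF A k (s + t) (rot k s j) := by
  have hj := j.isLt
  have hs : s ≤ k := by omega
  have hρc := rho_val hs j.castSucc
  have hρs := rho_val hs j.succ
  simp only [Fin.coe_castSucc, Fin.val_succ] at hρc hρs
  have hr := rot_val hs j
  simp only [dropF, apply_ite (rename (rho k s)), rename_X]
  rcases Nat.lt_trichotomy ((j : ℕ) + s) k with hc | hc | hc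
  · rw [if_pos hc] at hr
    rw [if_pos (by omega)] at hρc
    rw [if_pos (by omega)] at hρs
    split_ifs <;>
      first
      | (exfalso; omega)
      | (refine congrArg X (Fin.ext ?_); simp only [Fin.coe_castSucc, Fin.val_succ]; omega)
  · rw [if_neg (by omega)] at hr
    rw [if_pos (by omega)] at hρc
    rw [if_neg (by omega)] at hρs
    split_ifs <;>
      first
      | (exfalso; omega)
      | (refine congrArg X (Fin.ext ?_); simp only [Fin.coe_castSucc, Fin.val_succ]; omega)
  · rw [if_neg (by omega)] at hr
    rw [if_neg (by omega)] at hρc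
    rw [if_neg (by omega)] at hρs
    split_ifs <;>
      first
      | (exfalso; omega)
      | (refine congrArg X (Fin.ext ?_); simp only [Fin.coe_castSucc, Fin.val_succ]; omega)

lemma merge_compat {s i : ℕ} (hi : 1 ≤ i) (hsi : s + i ≤ k) (j : Fin k) :
    rename (rho k s) (mergeF A k i j) = mergeF A k (s + i) (rot k s j) := by
  have hj := j.isLt
  have hs : s ≤ k := by omega
  have hρc := rho_val hs j.castSucc
  have hρs := rho_val hs j.succ
  simp only [Fin.coe_castSucc, Fin.val_succ] at hρc hρs
  have hr := rot_val hs j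
  simp only [mergeF, apply_ite (rename (rho k s)), map_add, rename_X]
  rcases Nat.lt_trichotomy ((j : ℕ) + s) k with hc | hc | hc
  · rw [if_pos hc] at hr
    rw [if_pos (by omega)] at hρc
    rw [if_pos (by omega)] at hρs
    split_ifs <;>
      first
      | (exfalso; omega)
      | (refine congrArg X (Fin.ext ?_); simp only [Fin.coe_castSucc, Fin.val_succ]; omega)
      | (refine congrArg₂ (· + ·) (congrArg X (Fin.ext ?_)) (congrArg X (Fin.ext ?_)) <;>
          (simp only [Fin.coe_castSucc, Fin.val_succ]; omega))
  · rw [if_neg (by omega)] at hr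
    rw [if_pos (by omega)] at hρc
    rw [if_neg (by omega)] at hρs
    split_ifs <;>
      first
      | (exfalso; omega)
      | (refine congrArg X (Fin.ext ?_); simp only [Fin.coe_castSucc, Fin.val_succ]; omega)
      | (refine congrArg₂ (· + ·) (congrArg X (Fin.ext ?_)) (congrArg X (Fin.ext ?_)) <;>
          (simp only [Fin.coe_castSucc, Fin.val_succ]; omega))
  · rw [if_neg (by omega)] at hr
    rw [if_neg (by omega)] at hρc
    rw [if_neg (by omega)] at hρs
    split_ifs <;>
      first
      | (exfalso; omega)
      | (refine congrArg X (Fin.ext ?_); simp only [Fin.coe_castSucc, Fin.val_succ]; omega)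
      | (refine congrArg₂ (· + ·) (congrArg X (Fin.ext ?_)) (congrArg X (Fin.ext ?_)) <;>
          (simp only [Fin.coe_castSucc, Fin.val_succ]; omega))


lemma delta_shift {s m : ℕ} (f : MvPolynomial (Fin k) A) (hsym : f.IsSymmetric)
    (hm : 1 ≤ m) (hsm : s + m ≤ k) (hf : delta A m k f = 0) :
    aeval (dropF A k s) f
      + ∑ i ∈ Finset.Icc 1 m,
          (-1 : MvPolynomial (Fin (k + 1)) A) ^ i * aeval (mergeF A k (s + i)) f
      + (-1 : MvPolynomial (Fin (k + 1)) A) ^ (m + 1) * aeval (dropF A k (s + m)) f = 0 := by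
  have hs : s ≤ k := by omega
  let e : Equiv.Perm (Fin k) :=
    Equiv.ofBijective (rot k s) (Finite.injective_iff_bijective.mp (rot_injective hs))
  have hd : ∀ t, s + t ≤ k →
      rename (rho k s) (aeval (dropF A k t) f) = aeval (dropF A k (s + t)) f := by
    intro t ht
    rw [rename_aeval]
    have h1 : (fun j => rename (rho k s) (dropF A k t j))
        = fun j => dropF A k (s + t) (e j) := by
      funext j; rw [drop_compat ht]; rfl
    rw [h1, aeval_perm hsym]
  have hmg : ∀ i, 1 ≤ i → i ≤ m →
      rename (rho k s) (aeval (mergeF A k i) f) = aeval (mergeF A k (s + i)) f := by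
    intro i h1 h2
    rw [rename_aeval]
    have h3 : (fun j => rename (rho k s) (mergeF A k i j))
        = fun j => mergeF A k (s + i) (e j) := by
      funext j; rw [merge_compat h1 (by omega)]; rfl
    rw [h3, aeval_perm hsym]
  have h0 : rename (rho k s) (delta A m k f) = 0 := by rw [hf, map_zero]
  rw [delta_eq] at h0
  simp only [map_add, map_sum, map_mul, map_pow, map_neg, map_one] at h0
  rw [hd 0 (by omega), hd m hsm] at h0
  rw [Finset.sum_congr rfl (fun i hi => by
    rw [hmg i (Finset.mem_Icc.mp hi).1 (Finset.mem_Icc.mp hi).2])] at h0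
  simpa using h0

lemma sum_split (N M : ℕ) (g : ℕ → MvPolynomial (Fin (k + 1)) A) :
    ∑ i ∈ Finset.Icc 1 (N + M), g i
      = ∑ i ∈ Finset.Icc 1 N, g i + ∑ i ∈ Finset.Icc 1 M, g (N + i) := by
  have h1 : ∀ x : ℕ, Finset.Icc 1 x = Finset.Ioc 0 x := fun x =>
    Finset.ext fun y => by simp [Finset.mem_Icc, Finset.mem_Ioc]; omega
  rw [h1, h1, ← Finset.sum_Ioc_consecutive g (Nat.zero_le N) (Nat.le_add_right N M)]
  congr 1
  have h2 : Finset.Ioc N (N + M) = Finset.map (addLeftEmbedding N) (Finset.Icc 1 M) := by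
    rw [Finset.map_add_left_Icc]
    exact Finset.ext fun y => by simp [Finset.mem_Icc, Finset.mem_Ioc]
  rw [h2, Finset.sum_map]
  rfl

lemma add_cocycle {n m : ℕ} (f : MvPolynomial (Fin k) A) (hsym : f.IsSymmetric)
    (hn : 1 ≤ n) (hm : 1 ≤ m) (hnm : n + m ≤ k)
    (hfn : delta A n k f = 0) (hfm : delta A m k f = 0) :
    delta A (n + m) k f = 0 := by
  rw [delta_eq] at hfn ⊢
  rw [sum_split n m]
  have H2 := delta_shift (s := n) f hsym hm hnm hfm
  simp only [pow_add, mul_assoc, ← Finset.mul_sum]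
  simp only [pow_add] at hfn H2 ⊢
  linear_combination hfn + (-1 : MvPolynomial (Fin (k + 1)) A) ^ n * H2

lemma sub_cocycle {d m : ℕ} (f : MvPolynomial (Fin k) A) (hsym : f.IsSymmetric)
    (hd : 1 ≤ d) (hm : 1 ≤ m) (hnm : d + m ≤ k)
    (hfn : delta A (d + m) k f = 0) (hfm : delta A m k f = 0) :
    delta A d k f = 0 := by
  rw [delta_eq] at hfn ⊢
  rw [sum_split d m] at hfn
  have H2 := delta_shift (s := d) f hsym hm hnm hfm
  simp only [pow_add, mul_assoc, ← Finset.mul_sum] at hfn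
  simp only [pow_add] at hfn H2 ⊢
  linear_combination hfn - (-1 : MvPolynomial (Fin (k + 1)) A) ^ d * H2

end Stmt19

/-- A symmetric polynomial that is both an `n`-cocycle and an
`m`-cocycle is also an `(n+m)`-cocycle (provided `n + m < k`) and an
`|n−m|`-cocycle (provided `n ≠ m`). -/
theorem statement19 (A : Type*) [CommRing A] (k n m : ℕ)
    (hn1 : 1 ≤ n) (hnk : n ≤ k) (hm1 : 1 ≤ m) (hmk : m ≤ k)
    (f : MvPolynomial (Fin k) A) (hsym : f.IsSymmetric)
    (hfn : delta A n k f = 0) (hfm : delta A m k f = 0) :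
    (n + m < k → delta A (n + m) k f = 0) ∧
      (n ≠ m → delta A (Nat.dist n m) k f = 0) := by
  constructor
  · intro hlt
    exact Stmt19.add_cocycle f hsym hn1 hm1 (by omega) hfn hfm
  · intro hne
    rcases Nat.lt_or_ge n m with h | h
    · have hd : Nat.dist n m = m - n := by rw [Nat.dist_eq_sub_of_le (by omega)]
      rw [hd]
      have : m - n + n = m := by omega
      exact Stmt19.sub_cocycle f hsym (by omega) hn1 (by omega) (by rw [this]; exact hfm) hfn
    · have hlt : m < n := by omega
      have hd : Nat.dist n m = n - m := by
        rw [Nat.dist_comm, Nat.dist_eq_sub_of_le (by omega)]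
      rw [hd]
      have : n - m + m = n := by omega
      exact Stmt19.sub_cocycle f hsym (by omega) hm1 (by omega) (by rw [this]; exact hfn) hfm
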